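/- Let h : I → ℕ be annotations at a fixpoint of the provenance consequence operator T_P (i.e., applying T_P does not change any annotation). Then for every tuple t ∈ I with h(t) = k, there exists a valid proof tree for t of height exactly k. (Proof by strong induction on k: tuples with annotation 0 are EDB tuples; a tuple with annotation k > 0 has a rule instantiation t :- t₁,...,tₙ with h(t) = max_i h(tᵢ) + 1 and each h(tᵢ) < k.) -/

import Mathlib

inductive PTree (α : Type*) where
  | node : α → List (PTree α) → PTree α

namespace PTree
variable {α : Type*}

def root : PTree α → α
  | node t _ => t

mutual
def height : PTree α → ℕ
  | .node _ ts => heightList ts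
def heightList : List (PTree α) → ℕ
  | [] => 0
  | τ :: ts => max (height τ + 1) (heightList ts)
end

end PTree

/-- A valid proof tree: leaves are labeled with EDB tuples, and each internal
node with children labeled `t₁,...,tₙ` corresponds to a valid rule
instantiation `t :- t₁,...,tₙ`. -/
inductive IsProof {α : Type*} (EDB : Set α) (valid : α → List α → Prop) : PTree α → Prop where
  | leaf (t : α) (ht : t ∈ EDB) : IsProof EDB valid (PTree.node t [])
  | node (t : α) (ts : List (PTree α)) (hne : ts ≠ [])
      (hv : valid t (ts.map PTree.root))
      (hc : ∀ τ ∈ ts, IsProof EDB valid τ) : IsProof EDB valid (PTree.node t ts)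

/-- `max` of a list of naturals (0 for the empty list). -/
def maxList (l : List ℕ) : ℕ := l.foldr max 0


lemma le_maxList {a : ℕ} {l : List ℕ} (ha : a ∈ l) : a ≤ maxList l := by
  induction l with
  | nil => cases ha
  | cons b l ih =>
    rcases List.mem_cons.mp ha with rfl | ha
    · exact le_max_left _ _
    · exact le_trans (ih ha) (le_max_right _ _)

lemma heightList_eq {α : Type*} (ts : List (PTree α)) (hne : ts ≠ []) :
    PTree.heightList ts = maxList (ts.map PTree.height) + 1 := by
  induction ts with
  | nil => exact absurd rfl hne
  | cons τ ts ih =>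
    rcases eq_or_ne ts [] with rfl | hts
    · simp [PTree.heightList, maxList]
    · rw [PTree.heightList, ih hts]
      simp [maxList, Nat.succ_max_succ]

/-- At a fixpoint of the provenance consequence operator, every tuple `t ∈ I`
admits a valid proof tree of height exactly `h t`. -/
theorem exists_proof_tree_of_fixpoint {α : Type*} (EDB I : Set α)
    (valid : α → List α → Prop) (h : α → ℕ)
    (hEI : EDB ⊆ I)
    (hzero : ∀ t ∈ I, (h t = 0 ↔ t ∈ EDB))
    (hconf : ∀ t ∈ I, 0 < h t → ∃ ts : List α, ts ≠ [] ∧ valid t ts ∧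
        (∀ s ∈ ts, s ∈ I) ∧ h t = maxList (ts.map h) + 1) :
    ∀ t ∈ I, ∃ τ : PTree α, IsProof EDB valid τ ∧ τ.root = t ∧ τ.height = h t := by
  intro t ht
  suffices H : ∀ n, ∀ t ∈ I, h t = n →
      ∃ τ : PTree α, IsProof EDB valid τ ∧ τ.root = t ∧ τ.height = h t from
    H (h t) t ht rfl
  intro n
  induction n using Nat.strong_induction_on with
  | _ n IH =>
    intro t ht hn
    rcases Nat.eq_zero_or_pos (h t) with h0 | hpos
    · refine ⟨PTree.node t [], IsProof.leaf t ((hzero t ht).mp h0), rfl, ?_⟩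
      simp [PTree.height, PTree.heightList, h0]
    · obtain ⟨ts, hne, hv, hmem, heq⟩ := hconf t ht hpos
      have hlt : ∀ s ∈ ts, h s < n := by
        intro s hs
        have : h s ≤ maxList (ts.map h) := le_maxList (List.mem_map_of_mem (f := h) hs)
        omega
      have : ∃ τs : List (PTree α), τs.map PTree.root = ts ∧
          τs.map PTree.height = ts.map h ∧ ∀ τ ∈ τs, IsProof EDB valid τ := by
        clear hv hne heq
        induction ts with
        | nil => exact ⟨[], rfl, rfl, by simp⟩
        | cons s ts ih =>
          obtain ⟨τs, h1, h2, h3⟩ := ih (fun x hx => hmem x (List.mem_cons_of_mem _ hx))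
            (fun x hx => hlt x (List.mem_cons_of_mem _ hx))
          obtain ⟨τ, hp, hr, hh⟩ := IH (h s) (hlt s List.mem_cons_self) s
            (hmem s List.mem_cons_self) rfl
          refine ⟨τ :: τs, ?_, ?_, ?_⟩
          · simp [hr, h1]
          · simp [hh, h2]
          · intro x hx; rcases List.mem_cons.mp hx with rfl | hx
            · exact hp
            · exact h3 x hx
      obtain ⟨τs, hroots, hheights, hproofs⟩ := this
      have hτne : τs ≠ [] := by
        intro hE; rw [hE] at hroots; exact hne hroots.symm
      refine ⟨PTree.node t τs, IsProof.node t τs hτne (hroots ▸ hv) hproofs, rfl, ?_⟩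
      rw [PTree.height, heightList_eq τs hτne, hheights, heq]
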